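/- Let X be a topological space and let 𝒪' ≪ 𝒪 be a super-refinement of open covers of X. Then every (𝒪',𝒪)-parent map f: X → 𝒪 induces a well-defined chain map f_*: 𝒞_*(X,𝒪') → C_*(N(𝒪)), given on generators by [x_0,…,x_n] ↦ [f(x_0),…,f(x_n)]; in particular, whenever the set {x_0,…,x_n} is 𝒪'-tiny, one has f(x_0) ∩ … ∩ f(x_n) ≠ ∅. Moreover, for any two (𝒪',𝒪)-parent maps f, g: X → 𝒪, the induced chain maps f_*, g_*: 𝒞_*(X,𝒪') → C_*(N(𝒪)) are chain-homotopic. -/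

import Mathlib

/-!
If `{x₀,…,xₙ}` lies in some `V ∈ O'`, every parent `f xᵢ` or `g xᵢ` contains `V`, so any tuple
of such parents meets at `x₀`: both `f_*` and the prism operator only produce simplices of this
kind. The prism operator is built from the cone `v * [y₀,…,yₖ] = [v,y₀,…,yₖ]` by
`P(v * c) = f v * (g v * g c - P c)`, and the homotopy formula `∂P + P∂ = g - f` follows by
induction on the dimension from `∂(v * c) = c - v * ∂c`.
-/

/-- Discrete chains with `m` vertices: the free `ℤ`-module on ordered `m`-tuples of points. -/
abbrev DChain (α : Type*) (m : ℕ) := (Fin m → α) →₀ ℤ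

/-- The `i`-th face operator on discrete chains, deleting the `i`-th vertex. -/
noncomputable def dface {α : Type*} {m : ℕ} (i : Fin (m + 1)) :
    DChain α (m + 1) →ₗ[ℤ] DChain α m :=
  Finsupp.lmapDomain ℤ ℤ (fun σ => σ ∘ i.succAbove)

/-- The simplicial boundary operator on discrete chains:
`∂[x₀,…,xₙ] = ∑ i, (-1)^i [x₀,…,x̂ᵢ,…,xₙ]`. -/
noncomputable def dbd {α : Type*} {m : ℕ} : DChain α (m + 1) →ₗ[ℤ] DChain α m :=
  ∑ i : Fin (m + 1), ((-1 : ℤ) ^ (i : ℕ)) • dface i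

/-- The chain map induced by a map on vertices. -/
noncomputable def vmap {α β : Type*} (f : α → β) {m : ℕ} : DChain α m →ₗ[ℤ] DChain β m :=
  Finsupp.lmapDomain ℤ ℤ (fun σ => f ∘ σ)

/-- The support of a discrete chain: the set of vertices appearing in its
cancellation-free expression. -/
def chainSupp {α : Type*} {m : ℕ} (c : DChain α m) : Set α :=
  ⋃ σ ∈ c.support, Set.range σ

/-- An open cover of a topological space. -/
def IsOpenCover {X : Type*} [TopologicalSpace X] (O : Set (Set X)) : Prop :=
  (∀ U ∈ O, IsOpen U) ∧ ⋃₀ O = Set.univ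

/-- `O'` refines `O`: every element of `O'` is contained in some element of `O`. -/
def Refines {X : Type*} (O' O : Set (Set X)) : Prop :=
  ∀ U ∈ O', ∃ V ∈ O, U ⊆ V

/-- `O'` is a super-refinement of `O` (written `O' ≪ O`) if every point `x` has a *parent*:
an element of `O` containing every member of `O'` that contains `x`. -/
def SuperRefines {X : Type*} (O' O : Set (Set X)) : Prop :=
  ∀ x : X, ∃ U ∈ O, ∀ V ∈ O', x ∈ V → V ⊆ U

/-- A subset is `O`-tiny if it is contained in a single element of `O`. -/
def Tiny {X : Type*} (O : Set (Set X)) (A : Set X) : Prop :=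
  ∃ U ∈ O, A ⊆ U

/-- A discrete chain is `O`-fine if each of its simplices is `O`-tiny. -/
def FineChain {X : Type*} (O : Set (Set X)) {m : ℕ} (c : DChain X m) : Prop :=
  ∀ σ ∈ c.support, Tiny O (Set.range σ)

/-- A chain of tuples of sets is a nerve chain of the cover `O` if each of its simplices is a
tuple of elements of `O` with nonempty intersection. -/
def NerveChain {X : Type*} (O : Set (Set X)) {m : ℕ} (c : DChain (Set X) m) : Prop :=
  ∀ τ ∈ c.support, (∀ i, τ i ∈ O) ∧ (⋂ i, τ i).Nonempty

open Finsupp Set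

def IsParentMap {X : Type*} (O' O : Set (Set X)) (f : X → Set X) : Prop :=
  ∀ x, f x ∈ O ∧ ∀ V ∈ O', x ∈ V → V ⊆ f x

section Chains

variable {α β : Type*}

noncomputable def cone (v : α) {m : ℕ} : DChain α m →ₗ[ℤ] DChain α (m + 1) :=
  lmapDomain ℤ ℤ (Fin.cons (α := fun _ => α) v)

def chainsOn (S : Set α) (m : ℕ) : Submodule ℤ (DChain α m) :=
  supported ℤ ℤ {σ | range σ ⊆ S}

theorem cone_single (v : α) {m : ℕ} (σ : Fin m → α) (b : ℤ) :
    cone v (single σ b) = single (Fin.cons v σ) b :=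
  mapDomain_single

theorem vmap_single (f : α → β) {m : ℕ} (σ : Fin m → α) (b : ℤ) :
    vmap f (single σ b) = single (f ∘ σ) b :=
  mapDomain_single

theorem dbd_single {m : ℕ} (σ : Fin (m + 1) → α) (b : ℤ) :
    dbd (single σ b) = ∑ i : Fin (m + 1), (-1 : ℤ) ^ (i : ℕ) • single (σ ∘ i.succAbove) b := by
  simp [dbd, dface, LinearMap.sum_apply, mapDomain_single]

theorem ext_cone {M : Type*} [AddCommGroup M] {m : ℕ} {φ ψ : DChain α (m + 1) →ₗ[ℤ] M}
    (h : ∀ v (c : DChain α m), φ (cone v c) = ψ (cone v c)) : φ = ψ :=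
  lhom_ext fun σ b => by
    rw [← Fin.cons_self_tail σ, ← cone_single]
    exact h _ _

theorem dbd_cone_zero (v : α) (c : DChain α 0) : dbd (cone v c) = c := by
  induction c using Finsupp.induction_linear with
  | zero => simp
  | add c d hc hd => simp only [map_add, hc, hd]
  | single σ b => simp [cone_single, dbd_single, Fin.succAbove_zero]

theorem dbd_cone (v : α) {m : ℕ} (c : DChain α (m + 1)) :
    dbd (cone v c) = c - cone v (dbd c) := by
  induction c using Finsupp.induction_linear with
  | zero => simp
  | add c d hc hd => simp only [map_add, hc, hd]; abel
  | single σ b =>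
    have face_succ (i : Fin (m + 1)) :
        Fin.cons v σ ∘ i.succ.succAbove = Fin.cons v (σ ∘ i.succAbove) :=
      Fin.cons_comp_succ_succAbove v σ i
    rw [cone_single, dbd_single, Fin.sum_univ_succ, dbd_single, map_sum]
    simp only [Fin.succAbove_zero, Fin.cons_comp_succ, Fin.val_zero, pow_zero, one_smul,
      Fin.val_succ, pow_succ, mul_neg_one, neg_smul, face_succ, map_smul, cone_single,
      Finset.sum_neg_distrib, sub_eq_add_neg]

theorem vmap_cone (f : α → β) (v : α) {m : ℕ} (c : DChain α m) :
    vmap f (cone v c) = cone (f v) (vmap f c) := by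
  induction c using Finsupp.induction_linear with
  | zero => simp
  | add c d hc hd => simp only [map_add, hc, hd]
  | single σ b => simp [cone_single, vmap_single, Fin.comp_cons]

theorem dbd_vmap (f : α → β) {m : ℕ} (c : DChain α (m + 1)) :
    dbd (vmap f c) = vmap f (dbd c) := by
  induction c using Finsupp.induction_linear with
  | zero => simp
  | add c d hc hd => simp only [map_add, hc, hd]
  | single σ b =>
    simp only [vmap_single, dbd_single, map_sum, map_smul]
    rfl

theorem vmap_eq_of_dim_zero (f g : α → β) (c : DChain α 0) : vmap f c = vmap g c := by
  rw [vmap, vmap, funext fun σ : Fin 0 → α => Subsingleton.elim (f ∘ σ) (g ∘ σ)]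

end Chains

section Prism

variable {α β : Type*} (f g : α → β)

-- `P[x₀,…,xₙ] = ∑ⱼ (-1)ʲ [f x₀,…,f xⱼ, g xⱼ,…,g xₙ]`, unfolded at the first vertex.
noncomputable def prism : (m : ℕ) → DChain α m →ₗ[ℤ] DChain β (m + 1)
  | 0 => 0
  | m + 1 => linearCombination ℤ fun σ =>
      cone (f (σ 0)) (single (g ∘ σ) 1 - prism m (single (Fin.tail σ) 1))

theorem prism_zero : prism f g 0 = 0 := rfl

theorem prism_cone (v : α) {m : ℕ} (c : DChain α m) :
    prism f g (m + 1) (cone v c) = cone (f v) (cone (g v) (vmap g c) - prism f g m c) := by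
  induction c using Finsupp.induction_linear with
  | zero => simp
  | add c d hc hd => simp only [map_add, map_sub, hc, hd]; abel
  | single σ b =>
    rw [← smul_single_one σ b]
    simp only [map_smul]
    rw [← smul_sub, map_smul, cone_single, prism, linearCombination_single, one_smul,
      vmap_single, cone_single, Fin.cons_zero, Fin.tail_cons, Fin.comp_cons]

theorem dbd_prism_one (c : DChain α 1) : dbd (prism f g 1 c) = vmap g c - vmap f c := by
  suffices dbd ∘ₗ prism f g 1 = vmap g - vmap f from LinearMap.congr_fun this c
  refine ext_cone fun v s => ?_
  simp only [LinearMap.comp_apply, LinearMap.sub_apply, prism_cone, prism_zero,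
    LinearMap.zero_apply, sub_zero, dbd_cone, dbd_cone_zero, vmap_cone,
    vmap_eq_of_dim_zero g f s]

theorem dbd_prism_add_prism_dbd :
    ∀ (m : ℕ) (c : DChain α (m + 1)),
      dbd (prism f g (m + 1) c) + prism f g m (dbd c) = vmap g c - vmap f c
  | 0, c => by rw [prism_zero, LinearMap.zero_apply, add_zero, dbd_prism_one]
  | m + 1, c => by
    suffices dbd ∘ₗ prism f g (m + 2) + prism f g (m + 1) ∘ₗ dbd = vmap g - vmap f from
      LinearMap.congr_fun this c
    refine ext_cone fun v s => ?_
    have ih : dbd (prism f g (m + 1) s) = vmap g s - vmap f s - prism f g m (dbd s) :=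
      eq_sub_of_add_eq (dbd_prism_add_prism_dbd m s)
    simp only [LinearMap.add_apply, LinearMap.comp_apply, LinearMap.sub_apply, prism_cone,
      dbd_cone, map_sub, ih, dbd_vmap, vmap_cone]
    abel

end Prism

section Support

variable {α β : Type*}

theorem supported_le_comap_of_single {R M ι : Type*} [Semiring R] [AddCommMonoid M]
    [Module R M] {s : Set ι} {φ : (ι →₀ R) →ₗ[R] M} {p : Submodule R M}
    (h : ∀ i ∈ s, φ (single i 1) ∈ p) : supported R R s ≤ p.comap φ := by
  rw [supported_eq_span_single, Submodule.span_le]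
  rintro _ ⟨i, hi, rfl⟩
  exact h i hi

theorem chainsOn_mono {S T : Set α} (h : S ⊆ T) {m : ℕ} : chainsOn S m ≤ chainsOn T m :=
  supported_mono fun _ hσ => hσ.trans h

theorem single_mem_chainsOn_range {m : ℕ} (σ : Fin m → α) (b : ℤ) :
    single σ b ∈ chainsOn (range σ) m :=
  single_mem_supported ℤ b (subset_refl (range σ))

theorem cone_mem_chainsOn {S : Set α} {v : α} (hv : v ∈ S) {m : ℕ} {c : DChain α m}
    (hc : c ∈ chainsOn S m) : cone v c ∈ chainsOn S (m + 1) :=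
  supported_comap_lmapDomain ℤ ℤ (Fin.cons (α := fun _ => α) v) {σ | range σ ⊆ S} <|
    supported_mono (fun σ hσ => by simpa [Fin.range_cons] using insert_subset hv hσ) hc

theorem vmap_mem_chainsOn (f : α → β) {S : Set α} {m : ℕ} {c : DChain α m}
    (hc : c ∈ chainsOn S m) : vmap f c ∈ chainsOn (f '' S) m :=
  supported_comap_lmapDomain ℤ ℤ (f ∘ ·) {σ | range σ ⊆ f '' S} <|
    supported_mono (fun σ hσ => (range_comp f σ).trans_subset (image_mono hσ)) hc

theorem prism_mem_chainsOn (f g : α → β) {S : Set α} :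
    ∀ (m : ℕ) {c : DChain α m}, c ∈ chainsOn S m →
      prism f g m c ∈ chainsOn (f '' S ∪ g '' S) (m + 1)
  | 0, _, _ => zero_mem _
  | m + 1, c, hc => by
    refine supported_le_comap_of_single (φ := prism f g (m + 1))
      (p := chainsOn (f '' S ∪ g '' S) (m + 2)) (fun σ (hσ : range σ ⊆ S) => ?_) hc
    have hσ0 : σ 0 ∈ S := hσ (mem_range_self 0)
    have htail : single (Fin.tail σ) 1 ∈ chainsOn S m :=
      chainsOn_mono ((range_comp_subset_range Fin.succ σ).trans hσ)
        (single_mem_chainsOn_range _ 1)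
    rw [← Fin.cons_self_tail σ, ← cone_single, prism_cone]
    refine cone_mem_chainsOn (mem_union_left _ (mem_image_of_mem f hσ0)) (sub_mem ?_ ?_)
    · exact cone_mem_chainsOn (mem_union_right _ (mem_image_of_mem g hσ0))
        (chainsOn_mono subset_union_right (vmap_mem_chainsOn g htail))
    · exact prism_mem_chainsOn f g m htail

end Support

section Nerve

variable {X : Type*} {O' O : Set (Set X)} {f g : X → Set X}

theorem IsParentMap.isNerveSimplex (hf : IsParentMap O' O f) (hg : IsParentMap O' O g)
    {m k : ℕ} {σ : Fin (m + 1) → X} (hσ : Tiny O' (range σ)) {τ : Fin k → Set X}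
    (hτ : range τ ⊆ f '' range σ ∪ g '' range σ) :
    (∀ i, τ i ∈ O) ∧ (⋂ i, τ i).Nonempty := by
  obtain ⟨V, hV, hσV⟩ := hσ
  have hτV : ∀ i, τ i ∈ O ∧ V ⊆ τ i := fun i => by
    rcases hτ (mem_range_self i) with ⟨_, ⟨j, rfl⟩, hj⟩ | ⟨_, ⟨j, rfl⟩, hj⟩ <;> rw [← hj]
    · exact ⟨(hf _).1, (hf _).2 V hV (hσV (mem_range_self j))⟩
    · exact ⟨(hg _).1, (hg _).2 V hV (hσV (mem_range_self j))⟩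
  exact ⟨fun i => (hτV i).1, σ 0, mem_iInter.2 fun i => (hτV i).2 (hσV (mem_range_self 0))⟩

theorem IsParentMap.nerveChain_of_mem_chainsOn (hf : IsParentMap O' O f)
    (hg : IsParentMap O' O g) {m k : ℕ} {σ : Fin (m + 1) → X} (hσ : Tiny O' (range σ))
    {c : DChain (Set X) k} (hc : c ∈ chainsOn (f '' range σ ∪ g '' range σ) k) :
    NerveChain O c :=
  fun _ hτ => hf.isNerveSimplex hg hσ (hc hτ)

theorem nerveChain_of_fineChain {m k : ℕ} (φ : DChain X m →ₗ[ℤ] DChain (Set X) k)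
    (hφ : ∀ σ, Tiny O' (range σ) → NerveChain O (φ (single σ 1))) {c : DChain X m}
    (hc : FineChain O' c) : NerveChain O (φ c) :=
  supported_le_comap_of_single
    (p := supported ℤ ℤ {τ : Fin k → Set X | (∀ i, τ i ∈ O) ∧ (⋂ i, τ i).Nonempty}) hφ hc

end Nerve

theorem parentMap_chainMap_general {X : Type*} (O' O : Set (Set X))
    (f : X → Set X) (hf : ∀ x : X, f x ∈ O ∧ ∀ V ∈ O', x ∈ V → V ⊆ f x) :
    (∀ (m : ℕ) (σ : Fin (m + 1) → X), Tiny O' (Set.range σ) →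
      (∀ i, f (σ i) ∈ O) ∧ (⋂ i, f (σ i)).Nonempty) ∧
    (∀ (m : ℕ) (c : DChain X (m + 1)), FineChain O' c → NerveChain O (vmap f c)) ∧
    (∀ (m : ℕ) (c : DChain X (m + 2)), dbd (vmap f c) = vmap f (dbd c)) ∧
    (∀ g : X → Set X, (∀ x : X, g x ∈ O ∧ ∀ V ∈ O', x ∈ V → V ⊆ g x) →
      ∃ H : ∀ m : ℕ, DChain X (m + 1) →ₗ[ℤ] DChain (Set X) (m + 2),
        (∀ (m : ℕ) (c : DChain X (m + 1)), FineChain O' c → NerveChain O (H m c)) ∧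
        (∀ c : DChain X 1, FineChain O' c →
          dbd (H 0 c) = vmap g c - vmap f c) ∧
        (∀ (m : ℕ) (c : DChain X (m + 2)), FineChain O' c →
          dbd (H (m + 1) c) + H m (dbd c) = vmap g c - vmap f c)) := by
  have hf : IsParentMap O' O f := hf
  refine ⟨fun m σ hσ => hf.isNerveSimplex hf hσ ((range_comp f σ).trans_subset
      subset_union_left), fun m c hc => ?_, fun m c => dbd_vmap f c, fun g hg => ?_⟩
  · refine nerveChain_of_fineChain (vmap f) (fun σ hσ => ?_) hc
    exact hf.nerveChain_of_mem_chainsOn hf hσ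
      (chainsOn_mono subset_union_left (vmap_mem_chainsOn f (single_mem_chainsOn_range σ 1)))
  · refine ⟨fun m => prism f g (m + 1), fun m c hc => ?_, fun c _ => dbd_prism_one f g c,
      fun m c _ => dbd_prism_add_prism_dbd f g (m + 1) c⟩
    refine nerveChain_of_fineChain (prism f g (m + 1)) (fun σ hσ => ?_) hc
    exact hf.nerveChain_of_mem_chainsOn hg hσ
      (prism_mem_chainsOn f g (m + 1) (single_mem_chainsOn_range σ 1))

/-- Let `O' ≪ O` be a super-refinement of open covers of `X`.  Every
`(O',O)`-parent map `f : X → O` (i.e. `f x ∈ O` and `V ⊆ f x` whenever `x ∈ V ∈ O'`)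
induces a well-defined chain map `f_* : 𝒞_*(X,O') → C_*(N(O))`,
`[x₀,…,xₙ] ↦ [f x₀,…,f xₙ]`: whenever `{x₀,…,xₙ}` is `O'`-tiny, `f x₀ ∩ … ∩ f xₙ ≠ ∅`,
`O'`-fine chains go to nerve chains of `O`, and the map commutes with the boundary.
Moreover any two parent maps `f, g` induce chain-homotopic maps. -/
theorem parentMap_chainMap {X : Type*} [TopologicalSpace X] (O' O : Set (Set X))
    (hO' : IsOpenCover O') (hO : IsOpenCover O) (hsr : SuperRefines O' O)
    (f : X → Set X) (hf : ∀ x : X, f x ∈ O ∧ ∀ V ∈ O', x ∈ V → V ⊆ f x) :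
    (∀ (m : ℕ) (σ : Fin (m + 1) → X), Tiny O' (Set.range σ) →
      (∀ i, f (σ i) ∈ O) ∧ (⋂ i, f (σ i)).Nonempty) ∧
    (∀ (m : ℕ) (c : DChain X (m + 1)), FineChain O' c → NerveChain O (vmap f c)) ∧
    (∀ (m : ℕ) (c : DChain X (m + 2)), dbd (vmap f c) = vmap f (dbd c)) ∧
    (∀ g : X → Set X, (∀ x : X, g x ∈ O ∧ ∀ V ∈ O', x ∈ V → V ⊆ g x) →
      ∃ H : ∀ m : ℕ, DChain X (m + 1) →ₗ[ℤ] DChain (Set X) (m + 2),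
        (∀ (m : ℕ) (c : DChain X (m + 1)), FineChain O' c → NerveChain O (H m c)) ∧
        (∀ c : DChain X 1, FineChain O' c →
          dbd (H 0 c) = vmap g c - vmap f c) ∧
        (∀ (m : ℕ) (c : DChain X (m + 2)), FineChain O' c →
          dbd (H (m + 1) c) + H m (dbd c) = vmap g c - vmap f c)) :=
  parentMap_chainMap_general O' O f hf
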